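/- arXiv:1905.10294 — 2 statements merged into one kernel-verified Lean document; each statement's English description precedes it below -/
import Mathlib

section
/- Let I be a (full-supported) matroidal ideal of degree d in R = k[x_1,...,x_n], and let x, y be two variables of R such that xy does not divide u for every u in the minimal monomial generating set G(I). Then the colon ideals coincide: (I : x) = (I : y). -/
/-!
All ideals involved are monomial, so it suffices to show that `x_p u ∈ I` implies `x_q u ∈ I`
for every monomial `u`. If a minimal generator `g` divides `x_p u` but not `u`, then `x_p ∣ g`,
hence `x_q ∤ g`, and it is enough to see `g x_q / x_p ∈ I`. By full support there are minimal
generators divisible by `x_q`; take one, `b`, minimising `deg (b / gcd(b, g))`. As `x_p ∤ b`,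
the exchange property for `g` against `b` at `p` gives `g x_j / x_p ∈ I` with `x_j ∣ b`,
`x_j ∤ g`. If `j ≠ q`, the exchange for `b` against `g` at `j` yields a minimal generator
`b x_l / x_j`, still divisible by `x_q` and closer to `g`: a contradiction, so `j = q`.
-/

open MvPolynomial

namespace PaperDefs

variable {k : Type*} [Field k] {n : ℕ}

/-- The total degree of an exponent vector. -/
def edeg (a : Fin n →₀ ℕ) : ℕ := ∑ i, a i

/-- `I` is a monomial ideal: it is generated by a set of monomials. -/
def IsMonomialIdeal (I : Ideal (MvPolynomial (Fin n) k)) : Prop :=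
  ∃ S : Set (Fin n →₀ ℕ),
    I = Ideal.span ((fun a => (MvPolynomial.monomial a (1 : k))) '' S)

/-- The (exponent vectors of the) unique minimal monomial generating set `G(I)`:
monomials of `I` that are minimal with respect to divisibility. -/
def minGens (I : Ideal (MvPolynomial (Fin n) k)) : Set (Fin n →₀ ℕ) :=
  {a | (MvPolynomial.monomial a (1 : k)) ∈ I ∧
    ∀ b : Fin n →₀ ℕ, b < a → (MvPolynomial.monomial b (1 : k)) ∉ I}

/-- A squarefree exponent vector. -/
def SqFree (a : Fin n →₀ ℕ) : Prop := ∀ i, a i ≤ 1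

/-- `I` is a polymatroidal ideal of degree `d`. -/
def IsPolymatroidal (I : Ideal (MvPolynomial (Fin n) k)) (d : ℕ) : Prop :=
  IsMonomialIdeal I ∧ I ≠ ⊥ ∧
  (∀ a ∈ minGens I, edeg a = d) ∧
  ∀ a ∈ minGens I, ∀ b ∈ minGens I, ∀ i : Fin n, b i < a i →
    ∃ j : Fin n, a j < b j ∧
      (MvPolynomial.monomial (a - Finsupp.single i 1 + Finsupp.single j 1) (1 : k)) ∈ I

/-- `I` is a matroidal ideal of degree `d`: a squarefree polymatroidal ideal. -/
def IsMatroidal (I : Ideal (MvPolynomial (Fin n) k)) (d : ℕ) : Prop :=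
  IsPolymatroidal I d ∧ ∀ a ∈ minGens I, SqFree a

/-- `I` is full-supported: every variable divides some minimal generator. -/
def FullSupported (I : Ideal (MvPolynomial (Fin n) k)) : Prop :=
  ∀ i : Fin n, ∃ a ∈ minGens I, a i ≠ 0

/-- The maximal graded ideal `(x_1, ..., x_n)`. -/
noncomputable def varIdeal (k : Type*) [Field k] (n : ℕ) : Ideal (MvPolynomial (Fin n) k) :=
  Ideal.span (Set.range MvPolynomial.X)

/-- The colon ideal `(I : x_i)`. -/
noncomputable def colonVar (I : Ideal (MvPolynomial (Fin n) k)) (i : Fin n) :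
    Ideal (MvPolynomial (Fin n) k) :=
  I.colon ((Ideal.span {MvPolynomial.X i} : Ideal (MvPolynomial (Fin n) k)) : Set (MvPolynomial (Fin n) k))

/-- The height of an ideal: the infimum of `Order.height` over the primes containing it. -/
noncomputable def ht {R : Type*} [CommRing R] (I : Ideal R) : ℕ∞ :=
  ⨅ (p : PrimeSpectrum R) (_ : I ≤ p.asIdeal), Order.height p

/-- `I` is unmixed: all associated primes of `R/I` have the same height. -/
def IsUnmixed (I : Ideal (MvPolynomial (Fin n) k)) : Prop :=
  ∀ p ∈ associatedPrimes (MvPolynomial (Fin n) k) (MvPolynomial (Fin n) k ⧸ I),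
    ∀ q ∈ associatedPrimes (MvPolynomial (Fin n) k) (MvPolynomial (Fin n) k ⧸ I),
      ht p = ht q

/-- The arithmetical rank of `I`. -/
noncomputable def ara (I : Ideal (MvPolynomial (Fin n) k)) : ℕ :=
  sInf {t : ℕ | ∃ f : Fin t → MvPolynomial (Fin n) k,
    (Ideal.span (Set.range f)).radical = I.radical}

/-- The squarefree Veronese ideal of degree `d`. -/
noncomputable def sqfreeVeronese (k : Type*) [Field k] (n d : ℕ) : Ideal (MvPolynomial (Fin n) k) :=
  Ideal.span ((fun s : Finset (Fin n) => ∏ i ∈ s, MvPolynomial.X i) ''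
    {s : Finset (Fin n) | s.card = d})

/-- The depth of `R/I` : the supremum of lengths of `R/I`-regular sequences consisting of
elements of the maximal graded ideal. -/
noncomputable def quotDepth (I : Ideal (MvPolynomial (Fin n) k)) : ℕ :=
  sSup {r : ℕ | ∃ rs : List (MvPolynomial (Fin n) k), rs.length = r ∧
    (∀ x ∈ rs, x ∈ varIdeal k n) ∧
    RingTheory.Sequence.IsRegular (MvPolynomial (Fin n) k ⧸ I) rs}

/-- `R/I` is Cohen–Macaulay: the depth of `R/I` equals its Krull dimension. -/
def IsCohenMacaulayQuot (I : Ideal (MvPolynomial (Fin n) k)) : Prop :=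
  (quotDepth I : WithBot ℕ∞) = ringKrullDim (MvPolynomial (Fin n) k ⧸ I)

end PaperDefs

namespace Finsupp

variable {σ : Type*}

lemma degree_lt_degree {a b : σ →₀ ℕ} (h : a < b) : a.degree < b.degree := by
  obtain ⟨c, rfl⟩ := le_iff_exists_add.1 h.le
  have hc : c.degree ≠ 0 := by
    rw [Ne, degree_eq_zero_iff]
    rintro rfl
    simp at h
  rw [map_add]
  omega

lemma single_add_single_le [DecidableEq σ] {a : σ →₀ ℕ} {p q : σ} (hpq : p ≠ q)
    (hp : a p ≠ 0) (hq : a q ≠ 0) : single p 1 + single q 1 ≤ a := fun i => by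
  simp only [coe_add, Pi.add_apply, single_apply]
  grind

end Finsupp

lemma MvPolynomial.monomial_mem_of_le {σ R : Type*} [CommSemiring R]
    {I : Ideal (MvPolynomial σ R)} {a b : σ →₀ ℕ}
    (h : monomial b (1 : R) ∈ I) (hle : b ≤ a) : monomial a (1 : R) ∈ I := by
  rw [← tsub_add_cancel_of_le hle, ← one_mul (1 : R), ← monomial_mul]
  exact I.mul_mem_left _ h

open Finsupp

namespace PaperDefs

variable {k : Type*} [Field k] {n : ℕ}

lemma edeg_eq_degree (a : Fin n →₀ ℕ) : edeg a = a.degree := (degree_eq_sum a).symm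

lemma exists_mem_minGens_le {I : Ideal (MvPolynomial (Fin n) k)} (a : Fin n →₀ ℕ)
    (ha : monomial a (1 : k) ∈ I) : ∃ g ∈ minGens I, g ≤ a := by
  induction a using WellFoundedLT.induction with
  | _ a ih =>
    by_cases hmin : ∀ b < a, monomial b (1 : k) ∉ I
    · exact ⟨a, ⟨ha, hmin⟩, le_rfl⟩
    · push Not at hmin
      obtain ⟨b, hba, hb⟩ := hmin
      obtain ⟨g, hg, hgb⟩ := ih b hba hb
      exact ⟨g, hg, hgb.trans hba.le⟩

lemma mem_minGens_of_edeg_eq {I : Ideal (MvPolynomial (Fin n) k)} {d : ℕ}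
    (hdeg : ∀ a ∈ minGens I, edeg a = d) {a : Fin n →₀ ℕ}
    (ha : monomial a (1 : k) ∈ I) (had : edeg a = d) : a ∈ minGens I := by
  obtain ⟨g, hg, hga⟩ := exists_mem_minGens_le a ha
  obtain rfl | hlt := hga.eq_or_lt
  · exact hg
  · have := degree_lt_degree hlt
    rw [← edeg_eq_degree, ← edeg_eq_degree, hdeg g hg] at this
    omega

lemma edeg_sub_single_add_single {a : Fin n →₀ ℕ} {i : Fin n} (hi : a i ≠ 0) (j : Fin n) :
    edeg (a - single i 1 + single j 1) = edeg a := by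
  have h := congrArg degree
    (tsub_add_cancel_of_le (single_le_iff.2 (Nat.one_le_iff_ne_zero.2 hi)))
  simp only [edeg_eq_degree, map_add, degree_single] at h ⊢
  exact h

namespace IsMonomialIdeal

variable {I : Ideal (MvPolynomial (Fin n) k)}

lemma mem_iff (hI : IsMonomialIdeal I) {f : MvPolynomial (Fin n) k} :
    f ∈ I ↔ ∀ m ∈ f.support, monomial m (1 : k) ∈ I := by
  obtain ⟨S, rfl⟩ := hI
  simp [mem_ideal_span_monomial_image]

lemma mem_colonVar_iff (hI : IsMonomialIdeal I) {f : MvPolynomial (Fin n) k} {i : Fin n} :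
    f ∈ colonVar I i ↔ ∀ m ∈ f.support, monomial (m + single i 1) (1 : k) ∈ I := by
  rw [colonVar, Ideal.mem_colon_span_singleton, hI.mem_iff, support_mul_X]
  simp

end IsMonomialIdeal

namespace IsPolymatroidal

variable {I : Ideal (MvPolynomial (Fin n) k)} {d : ℕ}

lemma sub_single_add_single_mem (hI : IsPolymatroidal I d) {p q : Fin n}
    (hpq : ∀ a ∈ minGens I, a p = 0 ∨ a q = 0) (hq : ∃ b ∈ minGens I, b q ≠ 0)
    {g : Fin n →₀ ℕ} (hg : g ∈ minGens I) (hgp : g p ≠ 0) :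
    monomial (g - single p 1 + single q 1) (1 : k) ∈ I := by
  obtain ⟨-, -, hdeg, hexch⟩ := hI
  have hgq : g q = 0 := (hpq g hg).resolve_left hgp
  obtain ⟨b, ⟨hb, hbq⟩, hmin⟩ := (measure fun b => (b - g).degree).wf.has_min
    {b | b ∈ minGens I ∧ b q ≠ 0} hq
  have hbp : b p = 0 := (hpq b hb).resolve_right hbq
  obtain ⟨j, hj, hjI⟩ := hexch g hg b hb p (by omega)
  obtain rfl | hjq := eq_or_ne j q
  · exact hjI
  obtain ⟨l, hl, hlI⟩ := hexch b hb g hg j hj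
  have hjl : j ≠ l := by rintro rfl; omega
  have hlq : l ≠ q := by rintro rfl; omega
  set b' := b - single j 1 + single l 1
  have hb' : b' ∈ minGens I :=
    mem_minGens_of_edeg_eq hdeg hlI (by rw [edeg_sub_single_add_single (by omega), hdeg b hb])
  have hb'q : b' q ≠ 0 := by simpa [b', single_apply, hjq.symm, hlq.symm] using hbq
  have hcloser : b' - g < b - g := by
    refine lt_def.2 ⟨fun i => ?_, j, ?_⟩
    · simp only [b', coe_tsub, Finsupp.coe_add, Pi.sub_apply, Pi.add_apply, single_apply]
      split_ifs <;> subst_vars <;> omega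
    · simp [b', hjl.symm]
      omega
  exact (hmin b' ⟨hb', hb'q⟩ (degree_lt_degree hcloser)).elim

lemma monomial_add_single_mem (hI : IsPolymatroidal I d) {p q : Fin n}
    (hpq : ∀ a ∈ minGens I, a p = 0 ∨ a q = 0) (hq : ∃ b ∈ minGens I, b q ≠ 0)
    {m : Fin n →₀ ℕ} (hm : monomial (m + single p 1) (1 : k) ∈ I) :
    monomial (m + single q 1) (1 : k) ∈ I := by
  obtain ⟨g, hg, hgm⟩ := exists_mem_minGens_le _ hm
  by_cases hgp : g p = 0
  · refine monomial_mem_of_le hg.1 (le_trans (fun i => ?_) le_self_add)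
    have := hgm i
    simp only [Finsupp.coe_add, Pi.add_apply, single_apply] at this
    split_ifs at this <;> subst_vars <;> omega
  · exact monomial_mem_of_le (hI.sub_single_add_single_mem hpq hq hg hgp)
      (add_le_add_left (tsub_le_iff_right.2 hgm) _)

end IsPolymatroidal

end PaperDefs

open PaperDefs in
/-- Lemma 1.1, first part. If `I` is a full-supported matroidal ideal of
degree `d` and `x, y` are two variables such that `xy` divides no minimal generator of `I`,
then `(I : x) = (I : y)`. -/
theorem statement0 {k : Type*} [Field k] {n d : ℕ}
    (I : Ideal (MvPolynomial (Fin n) k))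
    (hI : IsMatroidal I d) (hfull : FullSupported I)
    (p q : Fin n) (hpq : p ≠ q)
    (hdvd : ∀ a ∈ minGens I, ¬ (Finsupp.single p 1 + Finsupp.single q 1 ≤ a)) :
    colonVar I p = colonVar I q := by
  have hdisj : ∀ a ∈ minGens I, a p = 0 ∨ a q = 0 := fun a ha => by
    classical
    by_contra! h
    exact hdvd a ha (single_add_single_le hpq h.1 h.2)
  have hmon := hI.1.1
  ext f
  rw [hmon.mem_colonVar_iff, hmon.mem_colonVar_iff]
  exact forall₂_congr fun m _ =>
    ⟨hI.1.monomial_add_single_mem hdisj (hfull q),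
      hI.1.monomial_add_single_mem (fun a ha => (hdisj a ha).symm) (hfull p)⟩
end

section
/- Let P be a finite subset of the polynomial ring R = k[x_1,...,x_n], and let P_0, P_1, ..., P_r be subsets of P such that: (a) P_0 ∪ P_1 ∪ ... ∪ P_r = P; (b) P_0 has exactly one element; (c) if p and p'' are different elements of P_i (for 0 < i ≤ r), then there is an integer j with 0 ≤ j < i and an element p' ∈ P_j such that pp'' ∈ (p'). For each i let q_i = Σ_{p ∈ P_i} p. Then the radical of the ideal generated by P equals the radical of the ideal (q_0, ..., q_r). -/
open MvPolynomial

section SchmittVogel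

variable {R : Type*} [CommRing R] {I : Ideal R}

/-- Since `p * p = p * ∑ s - ∑_{x ≠ p} p * x`, the element `p` is nilpotent modulo `√I`. -/
theorem Ideal.mem_radical_of_sum_mem_of_mul_mem {s : Finset R} {p : R} (hp : p ∈ s)
    (hsum : ∑ x ∈ s, x ∈ I.radical) (hmul : ∀ x ∈ s, x ≠ p → p * x ∈ I.radical) :
    p ∈ I.radical := by
  classical
  have hsplit : p * p + ∑ x ∈ s.erase p, p * x = p * ∑ x ∈ s, x := by
    rw [Finset.mul_sum, Finset.add_sum_erase _ _ hp]
  have hsq : p ^ 2 ∈ I.radical := by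
    rw [sq, eq_sub_of_add_eq hsplit]
    refine I.radical.sub_mem (I.radical.mul_mem_left p hsum) (I.radical.sum_mem fun x hx => ?_)
    exact hmul x (Finset.mem_of_mem_erase hx) (Finset.ne_of_mem_erase hx)
  simpa only [Ideal.radical_idem] using I.radical.mem_radical_iff.mpr ⟨2, hsq⟩

theorem Ideal.mem_radical_of_sum_mem_of_forall_mul_mem_span {ι : Type*} [Preorder ι]
    [WellFoundedLT ι] {Ps : ι → Finset R} (hsum : ∀ i, ∑ x ∈ Ps i, x ∈ I)
    (hchain : ∀ i, ∀ p ∈ Ps i, ∀ p'' ∈ Ps i, p ≠ p'' →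
      ∃ j, j < i ∧ ∃ p' ∈ Ps j, p * p'' ∈ Ideal.span {p'})
    (i : ι) : ∀ p ∈ Ps i, p ∈ I.radical := by
  induction i using WellFoundedLT.induction with
  | _ i ih =>
    intro p hp
    refine mem_radical_of_sum_mem_of_mul_mem hp (I.le_radical (hsum i)) fun p'' hp'' hne => ?_
    obtain ⟨j, hj, p', hp', hmul⟩ := hchain i p hp p'' hp'' hne.symm
    exact (Ideal.span_singleton_le_iff_mem _).mpr (ih j hj p' hp') hmul

end SchmittVogel

open PaperDefs in
/-- Lemma 2.1, Schmitt–Vogel. Let `P` be a finite subset of `R` and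
`P_0, ..., P_r` subsets of `P` covering `P`, with `P_0` a singleton, such that for any two
distinct `p, p'' ∈ P_i` (`0 < i`) there are `j < i` and `p' ∈ P_j` with `p·p'' ∈ (p')`.
Setting `q_i = Σ_{p ∈ P_i} p`, we have `√(P) = √(q_0, ..., q_r)`. -/
theorem statement10 {k : Type*} [Field k] {n : ℕ} (r : ℕ)
    (P : Finset (MvPolynomial (Fin n) k))
    (Ps : Fin (r + 1) → Finset (MvPolynomial (Fin n) k))
    (hsub : ∀ i, Ps i ⊆ P)
    (hcover : ∀ p ∈ P, ∃ i, p ∈ Ps i)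
    (hP0 : (Ps 0).card = 1)
    (hchain : ∀ i : Fin (r + 1), 0 < i → ∀ p ∈ Ps i, ∀ p'' ∈ Ps i, p ≠ p'' →
      ∃ j, j < i ∧ ∃ p' ∈ Ps j, p * p'' ∈ Ideal.span {p'}) :
    (Ideal.span (P : Set (MvPolynomial (Fin n) k))).radical =
      (Ideal.span (Set.range fun i : Fin (r + 1) => ∑ p ∈ Ps i, p)).radical := by
  set J := Ideal.span (Set.range fun i : Fin (r + 1) => ∑ p ∈ Ps i, p)
  have hchain_all : ∀ i, ∀ p ∈ Ps i, ∀ p'' ∈ Ps i, p ≠ p'' →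
      ∃ j, j < i ∧ ∃ p' ∈ Ps j, p * p'' ∈ Ideal.span {p'} := by
    intro i p hp p'' hp'' hne
    rcases eq_or_ne i 0 with rfl | hi
    · exact absurd (Finset.card_le_one.mp hP0.le p hp p'' hp'') hne
    · exact hchain i (Fin.pos_iff_ne_zero.mpr hi) p hp p'' hp'' hne
  have hmem : ∀ i, ∀ p ∈ Ps i, p ∈ J.radical :=
    Ideal.mem_radical_of_sum_mem_of_forall_mul_mem_span (fun i => Ideal.subset_span ⟨i, rfl⟩)
      hchain_all
  refine le_antisymm (Ideal.radical_le_radical_iff.mpr (Ideal.span_le.mpr fun p hp => ?_))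
    (Ideal.radical_mono (Ideal.span_le.mpr ?_))
  · obtain ⟨i, hi⟩ := hcover p hp
    exact hmem i p hi
  · rintro _ ⟨i, rfl⟩
    exact Ideal.sum_mem _ fun p hp => Ideal.subset_span (hsub i hp)
end
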